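/- Suppose M ∈ ℝ^{ν×d} is ζ-Diophantine, h : 𝕋^ν → [0,∞) is σ-admissible with zero set {θ̃₁,…,θ̃_R}, and x₁, x₂ ∈ ℤ^d are distinct points with h(Mx_j + θ) < L^{-α/γ} (j = 1,2) whose images Mx_j + θ both lie within distance (1/c)L^{-α/(σγ)} of the same zero θ̃. Then ‖x₁ - x₂‖ > C₁ L^{α/(σγζ)} for a constant C₁ depending only on C_ζ and c. -/

import Mathlib

/-!
Write `y = x₁ - x₂`. Shifting by `M y` carries the orbit point of `x₂` to that of `x₁`, so the
Diophantine condition bounds their distance below by `C_ζ ‖y‖^{-ζ}`; both lie within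
`(1/c) L^{-α/(σγ)}` of `θ̃`, so by the triangle inequality that distance is at most twice this
radius. Solving for `‖y‖` gives `‖y‖ ≥ (C_ζ c / 2)^{1/ζ} L^{α/(σγζ)}`.
-/

section OrbitPoint

variable {ν d : ℕ} {p : ℝ} (M : Matrix (Fin ν) (Fin d) ℝ)

def orbitPoint (x : Fin d → ℤ) (θ : Fin ν → AddCircle p) : Fin ν → AddCircle p :=
  fun i => ((∑ j, M i j * (x j : ℝ) : ℝ) : AddCircle p) + θ i

theorem orbitPoint_add (x y : Fin d → ℤ) (θ : Fin ν → AddCircle p) :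
    orbitPoint M (x + y) θ = orbitPoint M x (orbitPoint M y θ) := by
  funext i
  simp only [orbitPoint, Pi.add_apply, Int.cast_add, mul_add, Finset.sum_add_distrib,
    AddCircle.coe_add, add_assoc]

theorem orbitPoint_sub_self (x₁ x₂ : Fin d → ℤ) (θ : Fin ν → AddCircle p) :
    orbitPoint M (x₁ - x₂) (orbitPoint M x₂ θ) = orbitPoint M x₁ θ := by
  rw [← orbitPoint_add, sub_add_cancel]

theorem div_norm_sub_rpow_le_of_dist_orbitPoint_le {Cζ ζ r : ℝ}
    (hDio : ∀ x : Fin d → ℤ, x ≠ 0 → ∀ θ : Fin ν → AddCircle p,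
      Cζ / ‖x‖ ^ ζ ≤ dist (orbitPoint M x θ) θ)
    {x₁ x₂ : Fin d → ℤ} (hne : x₁ ≠ x₂) {θ θt : Fin ν → AddCircle p}
    (h₁ : dist (orbitPoint M x₁ θ) θt ≤ r) (h₂ : dist (orbitPoint M x₂ θ) θt ≤ r) :
    Cζ / ‖x₁ - x₂‖ ^ ζ ≤ 2 * r :=
  calc Cζ / ‖x₁ - x₂‖ ^ ζ ≤ dist (orbitPoint M x₁ θ) (orbitPoint M x₂ θ) := by
        simpa only [orbitPoint_sub_self] using
          hDio (x₁ - x₂) (sub_ne_zero.mpr hne) (orbitPoint M x₂ θ)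
    _ ≤ dist (orbitPoint M x₁ θ) θt + dist (orbitPoint M x₂ θ) θt := dist_triangle_right _ _ _
    _ ≤ 2 * r := by linarith

end OrbitPoint

theorem rpow_inv_div_le_of_div_rpow_le {a b n ζ : ℝ} (ha : 0 < a) (hb : 0 < b) (hn : 0 < n)
    (hζ : 0 < ζ) (h : a / n ^ ζ ≤ b) : (a / b) ^ ζ⁻¹ ≤ n := by
  rw [Real.rpow_inv_le_iff_of_pos (by positivity) hn.le hζ, div_le_iff₀ hb, mul_comm]
  rwa [div_le_iff₀ (by positivity)] at h

theorem stmt2_general (ν d : ℕ)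
    (ζ Cζ c σ α γ : ℝ) (hCζ : 0 < Cζ) (hc : 0 < c) (hζ : 0 < ζ) :
    ∃ C₁ > 0, ∀ (M : Matrix (Fin ν) (Fin d) ℝ),
      (∀ x : Fin d → ℤ, x ≠ 0 → ∀ θ : Fin ν → AddCircle (1 : ℝ),
        Cζ / ‖x‖ ^ ζ ≤
          dist (fun i => ((∑ j, M i j * (x j : ℝ) : ℝ) : AddCircle (1 : ℝ)) + θ i) θ) →
      ∀ (h : (Fin ν → AddCircle (1 : ℝ)) → ℝ), Continuous h →
      ∀ θt : Fin ν → AddCircle (1 : ℝ), h θt = 0 →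
      (∀ θ', c * dist θ' θt ^ σ ≤ h θ') →
      ∀ (θ : Fin ν → AddCircle (1 : ℝ)) (L : ℝ), 1 ≤ L →
      ∀ x₁ x₂ : Fin d → ℤ, x₁ ≠ x₂ →
        h (fun i => ((∑ j, M i j * (x₁ j : ℝ) : ℝ) : AddCircle (1 : ℝ)) + θ i)
          < L ^ (-(α / γ)) →
        h (fun i => ((∑ j, M i j * (x₂ j : ℝ) : ℝ) : AddCircle (1 : ℝ)) + θ i)
          < L ^ (-(α / γ)) →
        dist (fun i => ((∑ j, M i j * (x₁ j : ℝ) : ℝ) : AddCircle (1 : ℝ)) + θ i) θt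
          ≤ (1/c) * L ^ (-(α / (σ * γ))) →
        dist (fun i => ((∑ j, M i j * (x₂ j : ℝ) : ℝ) : AddCircle (1 : ℝ)) + θ i) θt
          ≤ (1/c) * L ^ (-(α / (σ * γ))) →
        C₁ * L ^ (α / (σ * γ * ζ)) < ‖x₁ - x₂‖ := by
  set C := (Cζ * c / 2) ^ ζ⁻¹
  refine ⟨C / 2, by positivity, ?_⟩
  intro M hDio h _ θt _ _ θ L hL x₁ x₂ hne _ _ h₁ h₂
  have hL₀ : 0 < L := one_pos.trans_le hL
  have hsep := div_norm_sub_rpow_le_of_dist_orbitPoint_le M hDio hne h₁ h₂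
  have hbound : C * L ^ (α / (σ * γ * ζ)) ≤ ‖x₁ - x₂‖ :=
    calc C * L ^ (α / (σ * γ * ζ))
        = (Cζ / (2 * (1 / c * L ^ (-(α / (σ * γ)))))) ^ ζ⁻¹ := by
          have hbase : Cζ / (2 * (1 / c * L ^ (-(α / (σ * γ)))))
              = Cζ * c / 2 * L ^ (α / (σ * γ)) := by
            rw [Real.rpow_neg hL₀.le]
            field_simp
          rw [hbase, Real.mul_rpow (by positivity) (by positivity), ← Real.rpow_mul hL₀.le,
            ← div_eq_mul_inv, div_div]
      _ ≤ ‖x₁ - x₂‖ := rpow_inv_div_le_of_div_rpow_le hCζ (by positivity)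
          (norm_pos_iff.mpr (sub_ne_zero.mpr hne)) hζ hsep
  have hpos : 0 < C * L ^ (α / (σ * γ * ζ)) := by positivity
  linarith

/-- Separation of resonances: distinct `x₁, x₂` whose images under the ζ-Diophantine shift both
lie within `(1/c)·L^{-α/(σγ)}` of a common zero `θ̃` of a σ-admissible `h`, and which are both
`L^{-α/γ}`-resonant, must satisfy `‖x₁-x₂‖ > C₁·L^{α/(σγζ)}` with `C₁ = C₁(C_ζ, c) > 0`. -/
theorem stmt2 (ν d : ℕ) (hd : 0 < d)
    (ζ Cζ c σ α γ : ℝ) (hCζ : 0 < Cζ) (hc : 0 < c) (hσ : 0 < σ) (hζ : 0 < ζ)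
    (hγ : 0 < γ) (hα : 0 < α) :
    ∃ C₁ > 0, ∀ (M : Matrix (Fin ν) (Fin d) ℝ),
      (∀ x : Fin d → ℤ, x ≠ 0 → ∀ θ : Fin ν → AddCircle (1 : ℝ),
        Cζ / ‖x‖ ^ ζ ≤
          dist (fun i => ((∑ j, M i j * (x j : ℝ) : ℝ) : AddCircle (1 : ℝ)) + θ i) θ) →
      ∀ (h : (Fin ν → AddCircle (1 : ℝ)) → ℝ), Continuous h →
      ∀ θt : Fin ν → AddCircle (1 : ℝ), h θt = 0 →
      (∀ θ', c * dist θ' θt ^ σ ≤ h θ') →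
      ∀ (θ : Fin ν → AddCircle (1 : ℝ)) (L : ℝ), 1 ≤ L →
      ∀ x₁ x₂ : Fin d → ℤ, x₁ ≠ x₂ →
        h (fun i => ((∑ j, M i j * (x₁ j : ℝ) : ℝ) : AddCircle (1 : ℝ)) + θ i)
          < L ^ (-(α / γ)) →
        h (fun i => ((∑ j, M i j * (x₂ j : ℝ) : ℝ) : AddCircle (1 : ℝ)) + θ i)
          < L ^ (-(α / γ)) →
        dist (fun i => ((∑ j, M i j * (x₁ j : ℝ) : ℝ) : AddCircle (1 : ℝ)) + θ i) θt
          ≤ (1/c) * L ^ (-(α / (σ * γ))) →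
        dist (fun i => ((∑ j, M i j * (x₂ j : ℝ) : ℝ) : AddCircle (1 : ℝ)) + θ i) θt
          ≤ (1/c) * L ^ (-(α / (σ * γ))) →
        C₁ * L ^ (α / (σ * γ * ζ)) < ‖x₁ - x₂‖ :=
  stmt2_general ν d ζ Cζ c σ α γ hCζ hc hζ
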